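/- arXiv:1311.4136 — 2 statements merged into one kernel-verified Lean document; each statement's English description precedes it below -/
import Mathlib

section
/- Let d ≥ 1 and 0 < α ≤ 2. The modified BRC function C : ℝ^d × ℝ → ℝ defined by C(x, e) = exp(−(√(‖x‖² + e²))^α), where ‖·‖ is the Euclidean norm on ℝ^d, is a positive definite function on ℝ^d × ℝ. -/
/-!
Schoenberg's argument. For `0 < α < 2` the subordination formula
`‖z‖ ^ α = c⁻¹ ∫₀^∞ (1 - exp (-t ‖z‖²)) t ^ (-1 - α / 2) dt`, `c > 0`, writes the kernel
`‖x‖ ^ α + ‖y‖ ^ α - ‖x - y‖ ^ α` as an integral of Gaussian kernels with their base point moved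
to the origin, so it is positive semidefinite; for `α = 2` it is twice the Gram kernel. By the
Schur product theorem the entrywise exponential of a positive semidefinite matrix is again
positive semidefinite, and `exp (-‖x - y‖ ^ α)` is the exponential of that kernel rescaled by
`exp (-‖x‖ ^ α) exp (-‖y‖ ^ α)`. The theorem is the case of the Euclidean space
`WithLp 2 (ℝ^d × ℝ)`.
-/

/-- A function `f : E → ℝ` on an additive group `E` is positive definite if for every `n`,
all points `x₁, …, xₙ ∈ E` and all real weights `λ₁, …, λₙ`, one has
`∑ᵢ ∑ⱼ λᵢ λⱼ f (xᵢ - xⱼ) ≥ 0`. -/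
def IsPosDefFun {E : Type*} [AddCommGroup E] (f : E → ℝ) : Prop :=
  ∀ (n : ℕ) (x : Fin n → E) (lam : Fin n → ℝ),
    0 ≤ ∑ i, ∑ j, lam i * lam j * f (x i - x j)

open Filter Topology MeasureTheory Set
open scoped ComplexOrder

namespace Matrix

variable {ι : Type*} [Fintype ι]

theorem PosSemidef.of_tendsto {𝕜 : Type*} [RCLike 𝕜] {X : Type*} {l : Filter X} [l.NeBot]
    {M : X → Matrix ι ι 𝕜} {A : Matrix ι ι 𝕜} (hM : ∀ᶠ a in l, (M a).PosSemidef)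
    (hA : Tendsto M l (𝓝 A)) : A.PosSemidef := by
  refine .of_dotProduct_mulVec_nonneg ?_ fun x => ?_
  · exact isClosed_eq continuous_id.matrix_conjTranspose continuous_id |>.mem_of_tendsto hA
      (hM.mono fun _ h => h.isHermitian)
  · refine ge_of_tendsto ((continuous_const.dotProduct (continuous_id.matrix_mulVec
      continuous_const)).tendsto A |>.comp hA) ?_
    exact hM.mono fun _ h => h.dotProduct_mulVec_nonneg x

theorem PosSemidef.map_pow {𝕜 : Type*} [RCLike 𝕜] {A : Matrix ι ι 𝕜} (hA : A.PosSemidef) :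
    ∀ k : ℕ, (A.map (· ^ k)).PosSemidef
  | 0 => by
    convert posSemidef_vecMulVec_self_star (1 : ι → 𝕜) using 1
    ext i j
    simp [vecMulVec_apply]
  | k + 1 => by
    convert (hA.map_pow k).hadamard hA using 1
    ext i j
    simp [pow_succ]

theorem PosSemidef.map_exp {A : Matrix ι ι ℝ} (hA : A.PosSemidef) :
    (A.map Real.exp).PosSemidef := by
  refine .of_tendsto (l := atTop)
    (M := fun N => ∑ k ∈ Finset.range N, (k.factorial : ℝ)⁻¹ • A.map (· ^ k))
    (Eventually.of_forall fun N => posSemidef_sum _ fun k _ => (hA.map_pow k).smul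
      (by positivity)) ?_
  refine tendsto_pi_nhds.2 fun i => tendsto_pi_nhds.2 fun j => ?_
  simpa [Matrix.sum_apply, Real.exp_eq_exp_ℝ, div_eq_inv_mul] using
    (NormedSpace.expSeries_div_hasSum_exp (A i j)).tendsto_sum_nat

theorem PosSemidef.exp_sub_sub {K : Matrix ι ι ℝ} (hK : K.PosSemidef) (g : ι → ℝ) :
    (of fun i j => Real.exp (K i j - g i - g j)).PosSemidef := by
  classical
  convert hK.map_exp.conjTranspose_mul_mul_same (diagonal fun i => Real.exp (-g i)) using 1
  ext i j
  simp only [of_apply, conjTranspose_eq_transpose_of_trivial, diagonal_transpose, mul_diagonal,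
    diagonal_mul, map_apply, Real.exp_sub, Real.exp_neg]
  ring

theorem PosSemidef.sub_basepoint {G : Matrix ι ι ℝ} (hG : G.PosSemidef) (i₀ : ι) :
    (of fun i j => G i j - G i i₀ - G i₀ j + G i₀ i₀).PosSemidef := by
  classical
  -- conjugate by the matrix sending `e j` to `e j - e i₀`
  convert hG.conjTranspose_mul_mul_same
    (1 - of fun p _ => if p = i₀ then 1 else 0 : Matrix ι ι ℝ) using 1
  ext i j
  simp only [of_apply, conjTranspose_eq_transpose_of_trivial, transpose_sub, transpose_one,
    sub_mul, mul_sub, one_mul, mul_one, mul_apply, sub_apply, transpose_apply, one_apply, ite_mul,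
    mul_ite, zero_mul, mul_zero, Finset.sum_ite_eq', Finset.mem_univ, if_true,
    Finset.sum_sub_distrib]
  ring

theorem posSemidef_integral {X : Type*} [MeasurableSpace X] {μ : Measure X}
    {M : X → Matrix ι ι ℝ} (hM : ∀ᵐ t ∂μ, (M t).PosSemidef)
    (hint : ∀ i j, Integrable (fun t => M t i j) μ) :
    (of fun i j => ∫ t, M t i j ∂μ).PosSemidef := by
  refine .of_dotProduct_mulVec_nonneg ?_ fun x => ?_
  · ext i j
    simpa using integral_congr_ae (hM.mono fun t h => h.isHermitian.apply i j)
  · have hquad : star x ⬝ᵥ (of (fun i j => ∫ t, M t i j ∂μ) *ᵥ x)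
        = ∫ t, star x ⬝ᵥ (M t *ᵥ x) ∂μ := by
      simp only [dotProduct, mulVec, of_apply, star_trivial]
      rw [integral_finsetSum _ fun i _ => (integrable_finsetSum _ fun j _ =>
        (hint i j).mul_const _).const_mul _]
      refine Finset.sum_congr rfl fun i _ => ?_
      rw [integral_const_mul, integral_finsetSum _ fun j _ => (hint i j).mul_const _]
      simp only [integral_mul_const]
    rw [hquad]
    exact integral_nonneg_of_ae (hM.mono fun t h => h.dotProduct_mulVec_nonneg x)

end Matrix

section Subordination

variable {β : ℝ}

theorem integrableOn_one_sub_exp_neg_mul_mul_rpow (hβ0 : 0 < β) (hβ1 : β < 1) {u : ℝ}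
    (hu : 0 ≤ u) :
    IntegrableOn (fun t => (1 - Real.exp (-(u * t))) * t ^ (-1 - β)) (Ioi 0) := by
  have hmeas : AEStronglyMeasurable fun t : ℝ => (1 - Real.exp (-(u * t))) * t ^ (-1 - β) := by
    fun_prop
  have hbound : ∀ t : ℝ, 0 < t →
      ‖(1 - Real.exp (-(u * t))) * t ^ (-1 - β)‖ ≤ min (u * t) 1 * t ^ (-1 - β) := by
    intro t ht
    have h0 : 0 ≤ 1 - Real.exp (-(u * t)) := by
      simpa using Real.exp_le_one_iff.2 (by nlinarith : -(u * t) ≤ 0)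
    rw [Real.norm_of_nonneg (mul_nonneg h0 (by positivity))]
    gcongr
    exact le_min (by linarith [Real.add_one_le_exp (-(u * t))])
      (by linarith [Real.exp_pos (-(u * t))])
  rw [← Ioc_union_Ioi_eq_Ioi zero_le_one]
  refine IntegrableOn.union ?_ ?_
  · have hg : IntegrableOn (fun t : ℝ => u * t ^ (-β)) (Ioc 0 1) :=
      ((integrableOn_Ioc_iff_integrableOn_Ioo).2
        (intervalIntegral.integrableOn_Ioo_rpow_iff one_pos |>.2 (by linarith))).const_mul u
    refine hg.mono' hmeas.restrict ((ae_restrict_mem measurableSet_Ioc).mono fun t ht => ?_)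
    calc _ ≤ min (u * t) 1 * t ^ (-1 - β) := hbound t ht.1
      _ ≤ u * t * t ^ (-1 - β) := mul_le_mul_of_nonneg_right (min_le_left _ _)
        (Real.rpow_nonneg ht.1.le _)
      _ = u * t ^ (-β) := by
        rw [mul_assoc, ← Real.rpow_one_add' ht.1.le (by linarith)]; ring_nf
  · have hg : IntegrableOn (fun t : ℝ => t ^ (-1 - β)) (Ioi 1) :=
      integrableOn_Ioi_rpow_of_lt (by linarith) one_pos
    refine hg.mono' hmeas.restrict ((ae_restrict_mem measurableSet_Ioi).mono fun t ht => ?_)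
    calc _ ≤ min (u * t) 1 * t ^ (-1 - β) := hbound t (one_pos.trans ht)
      _ ≤ t ^ (-1 - β) := by
        have : 0 ≤ t ^ (-1 - β) := Real.rpow_nonneg (zero_le_one.trans ht.out.le) _
        nlinarith [min_le_right (u * t) 1]

theorem setIntegral_one_sub_exp_neg_mul_mul_rpow (hβ0 : 0 < β) {u : ℝ} (hu : 0 ≤ u) :
    ∫ t in Ioi 0, (1 - Real.exp (-(u * t))) * t ^ (-1 - β)
      = u ^ β * ∫ t in Ioi 0, (1 - Real.exp (-t)) * t ^ (-1 - β) := by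
  rcases hu.eq_or_lt with rfl | hu
  · simp [Real.zero_rpow hβ0.ne']
  have hscale : ∀ t ∈ Ioi (0 : ℝ), (1 - Real.exp (-(u * t))) * t ^ (-1 - β)
      = u ^ (1 + β) * ((1 - Real.exp (-(u * t))) * (u * t) ^ (-1 - β)) := by
    intro t ht
    have hu1 : u ^ (1 + β) * u ^ (-1 - β) = 1 := by rw [← Real.rpow_add hu]; simp
    rw [Real.mul_rpow hu.le (le_of_lt ht)]
    linear_combination (-(1 - Real.exp (-(u * t))) * t ^ (-1 - β)) * hu1
  rw [setIntegral_congr_fun measurableSet_Ioi hscale, integral_const_mul,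
    integral_comp_mul_left_Ioi (fun s => (1 - Real.exp (-s)) * s ^ (-1 - β)) 0 hu, mul_zero,
    smul_eq_mul, ← mul_assoc, ← Real.rpow_neg_one, ← Real.rpow_add hu]
  ring_nf

theorem setIntegral_one_sub_exp_neg_mul_rpow_pos (hβ0 : 0 < β) (hβ1 : β < 1) :
    0 < ∫ t in Ioi 0, (1 - Real.exp (-t)) * t ^ (-1 - β) := by
  have hint := integrableOn_one_sub_exp_neg_mul_mul_rpow hβ0 hβ1 zero_le_one
  simp only [one_mul] at hint
  have hpos : ∀ t ∈ Ioi (0 : ℝ), 0 < (1 - Real.exp (-t)) * t ^ (-1 - β) := fun t ht =>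
    mul_pos (by simpa using Real.exp_lt_one_iff.2 (neg_lt_zero.2 ht))
      (Real.rpow_pos_of_pos ht.out _)
  rw [setIntegral_pos_iff_support_of_nonneg_ae
    ((ae_restrict_mem measurableSet_Ioi).mono fun t ht => (hpos t ht).le) hint]
  rw [show Function.support _ ∩ Ioi 0 = Ioi (0 : ℝ) from
    inter_eq_right.2 fun t ht => (hpos t ht).ne']
  simp

end Subordination

open Matrix

section InnerProductSpace

variable {F : Type*} [NormedAddCommGroup F] [InnerProductSpace ℝ F] {ι : Type*} [Fintype ι]

theorem posSemidef_exp_neg_norm_sub_sq_mul (v : ι → F) {t : ℝ} (ht : 0 ≤ t) :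
    (of fun i j => Real.exp (-(‖v i - v j‖ ^ 2 * t))).PosSemidef := by
  convert ((posSemidef_gram ℝ v).smul (by positivity : 0 ≤ 2 * t)).exp_sub_sub
    (fun i => t * ‖v i‖ ^ 2) using 1
  ext i j
  simp only [of_apply, Matrix.smul_apply, gram_apply, smul_eq_mul, norm_sub_sq_real]
  ring_nf

theorem posSemidef_one_sub_exp_neg_norm_sq_mul_add_sub (v : ι → F) {t : ℝ} (ht : 0 ≤ t) :
    (of fun i j => (1 - Real.exp (-(‖v i‖ ^ 2 * t))) + (1 - Real.exp (-(‖v j‖ ^ 2 * t)))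
      - (1 - Real.exp (-(‖v i - v j‖ ^ 2 * t)))).PosSemidef := by
  convert ((posSemidef_exp_neg_norm_sub_sq_mul (fun o : Option ι => o.elim 0 v) ht).sub_basepoint
    none).submatrix some using 1
  ext i j
  simp only [of_apply, submatrix_apply, Option.elim_none, Option.elim_some, sub_zero, zero_sub,
    sub_self, norm_neg, norm_zero, norm_sub_rev (v i), ne_eq, OfNat.ofNat_ne_zero,
    not_false_eq_true, zero_pow, zero_mul, neg_zero, Real.exp_zero]
  ring

theorem posSemidef_norm_rpow_add_norm_rpow_sub_norm_sub_rpow (v : ι → F) {α : ℝ} (hα0 : 0 < α)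
    (hα2 : α ≤ 2) : (of fun i j => ‖v i‖ ^ α + ‖v j‖ ^ α - ‖v i - v j‖ ^ α).PosSemidef := by
  rcases hα2.lt_or_eq with hα2 | rfl
  · obtain ⟨β, rfl⟩ : ∃ β, α = 2 * β := ⟨α / 2, by ring⟩
    have hβ0 : 0 < β := by linarith
    have hβ1 : β < 1 := by linarith
    let φ : ℝ → ℝ → ℝ := fun u t => (1 - Real.exp (-(u * t))) * t ^ (-1 - β)
    have hφ : ∀ z : F, IntegrableOn (φ (‖z‖ ^ 2)) (Ioi 0) := fun z =>
      integrableOn_one_sub_exp_neg_mul_mul_rpow hβ0 hβ1 (by positivity)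
    obtain ⟨c, hc, hφc⟩ : ∃ c > 0, ∀ u, 0 ≤ u → ∫ t in Ioi 0, φ u t = u ^ β * c :=
      ⟨_, setIntegral_one_sub_exp_neg_mul_rpow_pos hβ0 hβ1,
        fun u hu => setIntegral_one_sub_exp_neg_mul_mul_rpow hβ0 hu⟩
    have hnorm : ∀ z : F, ‖z‖ ^ (2 * β) = c⁻¹ * ∫ t in Ioi 0, φ (‖z‖ ^ 2) t := fun z => by
      rw [hφc _ (by positivity), ← Real.rpow_natCast, ← Real.rpow_mul (norm_nonneg z),
        Nat.cast_ofNat]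
      field_simp
    have hM : ∀ t ∈ Ioi (0 : ℝ),
        (of fun i j => φ (‖v i‖ ^ 2) t + φ (‖v j‖ ^ 2) t - φ (‖v i - v j‖ ^ 2) t).PosSemidef := by
      intro t ht
      convert (posSemidef_one_sub_exp_neg_norm_sq_mul_add_sub v ht.out.le).smul
        (Real.rpow_nonneg ht.out.le (-1 - β)) using 1
      ext i j
      simp only [of_apply, Matrix.smul_apply, smul_eq_mul, φ]
      ring
    have hK := (posSemidef_integral (ae_restrict_of_forall_mem measurableSet_Ioi hM)
      fun i j => ((hφ (v i)).add (hφ (v j))).sub (hφ (v i - v j))).smul (inv_nonneg.2 hc.le)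
    convert hK using 1
    ext i j
    simp only [of_apply, Matrix.smul_apply]
    rw [integral_sub (f := fun t => φ (‖v i‖ ^ 2) t + φ (‖v j‖ ^ 2) t) ((hφ _).add (hφ _))
      (hφ _), integral_add (hφ _) (hφ _), hnorm, hnorm, hnorm, smul_eq_mul]
    ring
  · have hG : (2 • gram ℝ v).PosSemidef := (posSemidef_gram ℝ v).smul zero_le_two
    convert hG using 1
    ext i j
    simp only [of_apply, Matrix.smul_apply, gram_apply, Real.rpow_two, norm_sub_sq_real]
    ring

end InnerProductSpace

theorem IsPosDefFun.of_posSemidef {E : Type*} [AddCommGroup E] {f : E → ℝ}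
    (hf : ∀ n (x : Fin n → E), (of fun i j => f (x i - x j)).PosSemidef) : IsPosDefFun f := by
  intro n x lam
  have h := (hf n x).dotProduct_mulVec_nonneg lam
  simp only [dotProduct, mulVec, of_apply, star_trivial, Finset.mul_sum] at h
  exact h.trans_eq (Finset.sum_congr rfl fun i _ => Finset.sum_congr rfl fun j _ => by ring)

theorem IsPosDefFun.comp_addMonoidHom {E E' : Type*} [AddCommGroup E] [AddCommGroup E']
    {f : E → ℝ} (hf : IsPosDefFun f) (g : E' →+ E) : IsPosDefFun (f ∘ g) := fun n x lam => by
  simpa using hf n (g ∘ x) lam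

theorem isPosDefFun_exp_neg_norm_rpow {F : Type*} [NormedAddCommGroup F] [InnerProductSpace ℝ F]
    {α : ℝ} (hα0 : 0 < α) (hα2 : α ≤ 2) : IsPosDefFun fun z : F => Real.exp (-‖z‖ ^ α) :=
  .of_posSemidef fun _ x => by
    convert (posSemidef_norm_rpow_add_norm_rpow_sub_norm_sub_rpow x hα0 hα2).exp_sub_sub
      (fun i => ‖x i‖ ^ α) using 1
    ext i j
    simp only [of_apply]
    ring_nf

theorem modified_brc_posDef_general (d : ℕ) (α : ℝ) (hα0 : 0 < α) (hα2 : α ≤ 2) :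
    IsPosDefFun (fun p : EuclideanSpace ℝ (Fin d) × ℝ =>
      Real.exp (-(Real.sqrt (‖p.1‖ ^ 2 + p.2 ^ 2)) ^ α)) := by
  convert (isPosDefFun_exp_neg_norm_rpow hα0 hα2).comp_addMonoidHom
    (WithLp.linearEquiv 2 ℝ (EuclideanSpace ℝ (Fin d) × ℝ)).symm.toAddMonoidHom using 1
  ext p
  simp [WithLp.prod_norm_eq_of_L2]

/-- For `d ≥ 1` and `0 < α ≤ 2`, the modified BRC function
`C(x, e) = exp(−(√(‖x‖² + e²))^α)` on `ℝ^d × ℝ` (with the Euclidean norm on `ℝ^d`)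
is positive definite. -/
theorem modified_brc_posDef (d : ℕ) (hd : 1 ≤ d) (α : ℝ) (hα0 : 0 < α) (hα2 : α ≤ 2) :
    IsPosDefFun (fun p : EuclideanSpace ℝ (Fin d) × ℝ =>
      Real.exp (-(Real.sqrt (‖p.1‖ ^ 2 + p.2 ^ 2)) ^ α)) :=
  modified_brc_posDef_general d α hα0 hα2
end

section
/- There exist parameters α_G > 0 and α_E > 0 such that the BRC kernel on S² × ℝ given by K((p, e), (q, e')) = exp(−(α_G · θ(p, q) + α_E · |e − e'|)^{1.01}), where θ(p, q) = arccos⟨p, q⟩ is the geodesic distance on the unit sphere S² ⊂ ℝ³, is not a positive definite kernel; that is, there exist points p₁, …, pₙ ∈ S², real values e₁, …, eₙ and real weights λ₁, …, λₙ with ∑_{i,j} λᵢ λⱼ K((pᵢ, eᵢ), (pⱼ, eⱼ)) < 0. -/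
/-!
Take the square `u, v, -u, -v` on a great circle, with alternating weights `1, -1, 1, -1`. For
a kernel `f(θ)` of the geodesic distance the quadratic form is `4 (f 0 - 2 f (π/2) + f π)`.
For `f θ = exp (-(α θ) ^ s)` and small `α` this is `≈ 4 (2 - 2 ^ s) (α π / 2) ^ s`, negative
as soon as `s > 1`. All points get the same real coordinate `e = 0`.
-/

open Real

lemma exists_one_add_exp_neg_mul_lt_two_mul_exp_neg {k : ℝ} (hk : 2 < k) :
    ∃ x > 0, 1 + exp (-(k * x)) < 2 * exp (-x) := by
  set x := (k - 2) / (4 * k)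
  have hx : 0 < x := div_pos (by linarith) (by linarith)
  refine ⟨x, hx, ?_⟩
  have hkx : 0 < 1 + k * x := by positivity
  -- `exp (-y) ≤ 1 / (1 + y)` and `1 - x ≤ exp (-x)`, and `x` is chosen so that
  -- `(1 - 2x)(1 + kx) = 1 + (k - 2) x / 2 > 1`.
  have h_upper : exp (-(k * x)) ≤ 1 / (1 + k * x) := by
    rw [exp_neg, one_div]
    exact inv_anti₀ hkx (by linarith [add_one_le_exp (k * x)])
  have h_lower : 1 - x ≤ exp (-x) := by linarith [add_one_le_exp (-x)]
  have h_prod : 1 < (1 - 2 * x) * (1 + k * x) := by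
    have : (1 - 2 * x) * (1 + k * x) = 1 + (k - 2) * x / 2 := by
      simp only [x]; field_simp; ring
    rw [this]; nlinarith
  have h_mid : 1 / (1 + k * x) < 1 - 2 * x := by rw [div_lt_iff₀ hkx]; linarith
  linarith

lemma exists_one_add_exp_neg_rpow_lt {s : ℝ} (hs : 1 < s) {d : ℝ} (hd : 0 < d) :
    ∃ α > 0, 1 + exp (-(α * (2 * d)) ^ s) < 2 * exp (-(α * d) ^ s) := by
  have hk : (2 : ℝ) < 2 ^ s := by
    simpa using rpow_lt_rpow_of_exponent_lt (by norm_num : (1 : ℝ) < 2) hs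
  obtain ⟨x, hx, hlt⟩ := exists_one_add_exp_neg_mul_lt_two_mul_exp_neg hk
  have hc : (x ^ s⁻¹) ^ s = x := rpow_inv_rpow hx.le (by linarith)
  refine ⟨x ^ s⁻¹ / d, by positivity, ?_⟩
  have h_d : x ^ s⁻¹ / d * d = x ^ s⁻¹ := div_mul_cancel₀ _ hd.ne'
  have h_2d : x ^ s⁻¹ / d * (2 * d) = 2 * x ^ s⁻¹ := by field_simp
  rwa [h_d, h_2d, mul_rpow zero_le_two (by positivity), hc]

section Square

variable {E : Type*} [NormedAddCommGroup E]

lemma square_mem_sphere {u v : E} (hu : ‖u‖ = 1) (hv : ‖v‖ = 1) (i : Fin 4) :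
    ![u, v, -u, -v] i ∈ Metric.sphere (0 : E) 1 := by
  fin_cases i <;> simp [hu, hv]

variable [InnerProductSpace ℝ E]

lemma sum_alternating_square_zonal (g : ℝ → ℝ) {u v : E} (hu : ‖u‖ = 1) (hv : ‖v‖ = 1)
    (huv : inner ℝ u v = 0) :
    ∑ i, ∑ j, ![1, -1, 1, -1] i * ![1, -1, 1, -1] j *
        g (inner ℝ (![u, v, -u, -v] i) (![u, v, -u, -v] j)) =
      4 * (g 1 - 2 * g 0 + g (-1)) := by
  have hvu : inner ℝ v u = (0 : ℝ) := by rw [real_inner_comm, huv]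
  simp [Fin.sum_univ_four, inner_neg_left, inner_neg_right, hu, hv, huv, hvu]
  ring

end Square

/-- There exist `α_G > 0`, `α_E > 0` such that the BRC kernel
`K((p, e), (q, e')) = exp(−(α_G · arccos⟨p, q⟩ + α_E · |e − e'|)^{1.01})` on `S² × ℝ`
(`S²` being the unit sphere in `ℝ³` with the geodesic distance `arccos⟨p, q⟩`) is not
positive definite: there are points `pᵢ ∈ S²`, values `eᵢ ∈ ℝ` and weights `λᵢ` with
`∑ᵢ ∑ⱼ λᵢ λⱼ K((pᵢ, eᵢ), (pⱼ, eⱼ)) < 0`. -/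
theorem brc_sphere_exponent_above_one_not_posDef :
    ∃ (αG αE : ℝ), 0 < αG ∧ 0 < αE ∧
      ∃ (n : ℕ) (p : Fin n → Metric.sphere (0 : EuclideanSpace ℝ (Fin 3)) 1)
        (e : Fin n → ℝ) (lam : Fin n → ℝ),
        ∑ i, ∑ j, lam i * lam j *
          Real.exp (-(αG * Real.arccos (inner ℝ (p i : EuclideanSpace ℝ (Fin 3))
              (p j : EuclideanSpace ℝ (Fin 3)) : ℝ) +
            αE * |e i - e j|) ^ (1.01 : ℝ)) < 0 := by
  obtain ⟨α, hα, hlt⟩ := exists_one_add_exp_neg_rpow_lt (s := 1.01) (by norm_num) (half_pos pi_pos)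
  set u : EuclideanSpace ℝ (Fin 3) := EuclideanSpace.single 0 1
  set v : EuclideanSpace ℝ (Fin 3) := EuclideanSpace.single 1 1
  have hu : ‖u‖ = 1 := by simp [u]
  have hv : ‖v‖ = 1 := by simp [v]
  have huv : inner ℝ u v = (0 : ℝ) := by simp [u, v, EuclideanSpace.inner_single_left]
  refine ⟨α, 1, hα, one_pos, 4, fun i => ⟨_, square_mem_sphere hu hv i⟩, fun _ => 0,
    ![1, -1, 1, -1], ?_⟩
  simp only [sub_self, abs_zero, mul_zero, add_zero]
  rw [sum_alternating_square_zonal (fun t => exp (-(α * arccos t) ^ (1.01 : ℝ))) hu hv huv]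
  have hπ : 2 * (π / 2) = π := by ring
  simp only [arccos_one, arccos_zero, arccos_neg_one, mul_zero, hπ] at hlt ⊢
  rw [zero_rpow (by norm_num), neg_zero, exp_zero]
  linarith
end
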